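/- arXiv:2509.23119 — 6 statements merged into one kernel-verified Lean document; each statement's English description precedes it below -/
import Mathlib

section
/- Let E be a real normed vector space and A ⊆ E a nonempty subset; write f(x) = infDist(x, A) for the distance function to A. Then for every x ∈ E and every real t₀ with 0 ≤ t₀ ≤ f(x), the level set L = {y ∈ E | f(y) = t₀} is nonempty and infDist(x, L) = f(x) − t₀. -/
/-- For any `a ∈ A`, there is a point `y` on the segment from `x` to `a` with
`infDist y A = t₀` and `dist x y ≤ dist x a - t₀`. -/
lemma eikonal_aux {E : Type*} [NormedAddCommGroup E] [NormedSpace ℝ E]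
    (A : Set E) (x : E) (t₀ : ℝ)
    (ht₀ : 0 ≤ t₀) (ht₀' : t₀ ≤ Metric.infDist x A) {a : E} (ha : a ∈ A) :
    ∃ y, Metric.infDist y A = t₀ ∧ dist x y ≤ dist x a - t₀ := by
  set φ : ℝ → ℝ := fun s => Metric.infDist (x + s • (a - x)) A with hφ
  have hcont : Continuous φ :=
    (Metric.continuous_infDist_pt A).comp (by continuity)
  have hφ0 : φ 0 = Metric.infDist x A := by simp [hφ]
  have hφ1 : φ 1 = 0 := by
    simp only [hφ, one_smul]
    rw [show x + (a - x) = a by abel]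
    exact Metric.infDist_zero_of_mem ha
  have ht : t₀ ∈ Set.Icc (φ 1) (φ 0) := by
    rw [hφ0, hφ1]; exact ⟨ht₀, ht₀'⟩
  obtain ⟨s, hs, hφs⟩ := intermediate_value_Icc' (by norm_num) hcont.continuousOn ht
  refine ⟨x + s • (a - x), hφs, ?_⟩
  have hd1 : dist x (x + s • (a - x)) = s * ‖a - x‖ := by
    rw [dist_eq_norm]
    simp [norm_smul, abs_of_nonneg hs.1]
  have hd2 : dist (x + s • (a - x)) a = (1 - s) * ‖a - x‖ := by
    rw [dist_eq_norm]
    have : x + s • (a - x) - a = -((1 - s) • (a - x)) := by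
      rw [sub_smul, one_smul]; abel
    rw [this, norm_neg, norm_smul, Real.norm_eq_abs, abs_of_nonneg (by linarith [hs.2])]
  have hle : t₀ ≤ (1 - s) * ‖a - x‖ := by
    rw [← hd2, ← hφs]
    exact Metric.infDist_le_dist_of_mem ha
  have hxa : dist x a = ‖a - x‖ := by rw [dist_eq_norm, norm_sub_rev]
  rw [hd1, hxa]
  nlinarith [norm_nonneg (a - x)]

/-- **Eikonal property of the distance function.**
Let `E` be a real normed vector space and `A ⊆ E` a nonempty subset; write
`f x = Metric.infDist x A` for the distance function to `A`.  Then for every `x ∈ E`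
and every real `t₀` with `0 ≤ t₀ ≤ f x`, the level set `L = {y | f y = t₀}` is
nonempty and `Metric.infDist x L = f x - t₀`. -/
theorem eikonal_level_set {E : Type*} [NormedAddCommGroup E] [NormedSpace ℝ E]
    (A : Set E) (hA : A.Nonempty) (x : E) (t₀ : ℝ)
    (ht₀ : 0 ≤ t₀) (ht₀' : t₀ ≤ Metric.infDist x A) :
    ({y : E | Metric.infDist y A = t₀}).Nonempty ∧
      Metric.infDist x {y : E | Metric.infDist y A = t₀} = Metric.infDist x A - t₀ := by
  obtain ⟨a, ha⟩ := hA
  obtain ⟨y₀, hy₀, _⟩ := eikonal_aux A x t₀ ht₀ ht₀' ha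
  have hLne : ({y : E | Metric.infDist y A = t₀}).Nonempty := ⟨y₀, hy₀⟩
  refine ⟨hLne, le_antisymm ?_ ?_⟩
  · -- upper bound: for every ε > 0
    refine le_of_forall_pos_le_add fun ε hε => ?_
    obtain ⟨b, hb, hdb⟩ := (Metric.infDist_lt_iff ⟨a, ha⟩).mp
      (show Metric.infDist x A < Metric.infDist x A + ε by linarith)
    obtain ⟨y, hy, hdy⟩ := eikonal_aux A x t₀ ht₀ ht₀' hb
    calc Metric.infDist x {y : E | Metric.infDist y A = t₀} ≤ dist x y :=
          Metric.infDist_le_dist_of_mem hy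
      _ ≤ dist x b - t₀ := hdy
      _ ≤ Metric.infDist x A - t₀ + ε := by linarith
  · -- lower bound
    by_contra h
    push_neg at h
    obtain ⟨y, hy, hdy⟩ := (Metric.infDist_lt_iff hLne).mp h
    rw [Set.mem_setOf_eq] at hy
    have h2 := Metric.infDist_le_infDist_add_dist (x := x) (y := y) (s := A)
    rw [hy] at h2
    linarith
end

section
/- Let E be a real normed vector space and A ⊆ E a nonempty subset. Then in Minkowski spacetime ℝ × E, the set J⁺({0} × A) has closure {(t, x) | infDist(x, A) ≤ t}, interior {(t, x) | infDist(x, A) < t}, and frontier (topological boundary) exactly the 'null cone graph' {(t, x) ∈ ℝ × E | t = infDist(x, A)}. -/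
/-- The causal future of a set `S` in Minkowski spacetime `ℝ × E`
(first coordinate is time): `J⁺(S) = {q | ∃ p ∈ S, ‖q.2 - p.2‖ ≤ q.1 - p.1}`. -/
def Jplus {E : Type*} [NormedAddCommGroup E] [NormedSpace ℝ E]
    (S : Set (ℝ × E)) : Set (ℝ × E) :=
  {q | ∃ p ∈ S, ‖q.2 - p.2‖ ≤ q.1 - p.1}

/-- **Causal boundary of an initial-slice set in Minkowski spacetime.**
Let `E` be a real normed vector space and `A ⊆ E` nonempty.  In Minkowski spacetime
`ℝ × E`, the set `J⁺({0} × A)` has closure `{(t, x) | infDist x A ≤ t}`, interior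
`{(t, x) | infDist x A < t}`, and frontier exactly the null cone graph
`{(t, x) | t = infDist x A}`. -/
theorem closure_interior_frontier_Jplus {E : Type*} [NormedAddCommGroup E] [NormedSpace ℝ E]
    (A : Set E) (hA : A.Nonempty) :
    closure (Jplus (({0} : Set ℝ) ×ˢ A)) = {p : ℝ × E | Metric.infDist p.2 A ≤ p.1} ∧
    interior (Jplus (({0} : Set ℝ) ×ˢ A)) = {p : ℝ × E | Metric.infDist p.2 A < p.1} ∧
    frontier (Jplus (({0} : Set ℝ) ×ˢ A)) = {p : ℝ × E | p.1 = Metric.infDist p.2 A} := by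
  set J := Jplus (({0} : Set ℝ) ×ˢ A)
  set U : Set (ℝ × E) := {p : ℝ × E | Metric.infDist p.2 A < p.1}
  set C : Set (ℝ × E) := {p : ℝ × E | Metric.infDist p.2 A ≤ p.1}
  have hcont : Continuous fun p : ℝ × E => Metric.infDist p.2 A :=
    (Metric.continuous_infDist_pt A).comp continuous_snd
  have hU_open : IsOpen U := isOpen_lt hcont continuous_fst
  have hC_closed : IsClosed C := isClosed_le hcont continuous_fst
  have hUJ : U ⊆ J := by
    intro p hp
    obtain ⟨a, ha, hda⟩ := (Metric.infDist_lt_iff hA).1 hp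
    exact ⟨(0, a), ⟨rfl, ha⟩, by
      simp only [dist_eq_norm] at hda
      simpa using hda.le⟩
  have hJC : J ⊆ C := by
    rintro p ⟨⟨s, a⟩, ⟨hs, ha⟩, hle⟩
    simp only [Set.mem_singleton_iff] at hs
    subst hs
    have := Metric.infDist_le_dist_of_mem (x := p.2) ha
    rw [dist_eq_norm] at this
    simpa [C] using this.trans (by simpa using hle)
  have hCclU : C ⊆ closure U := by
    intro p hp
    rw [Metric.mem_closure_iff]
    intro ε hε
    refine ⟨(p.1 + ε / 2, p.2), ?_, ?_⟩
    · simp only [U, Set.mem_setOf_eq]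
      have : Metric.infDist p.2 A ≤ p.1 := hp
      linarith
    · rw [Prod.dist_eq]
      simp only [dist_self, Real.dist_eq]
      rw [show p.1 - (p.1 + ε / 2) = -(ε / 2) by ring, abs_neg, abs_of_pos (by linarith)]
      simp only [max_eq_left (le_of_lt (by linarith : (0:ℝ) < ε / 2))]
      linarith
  have hintC : interior C ⊆ U := by
    intro p hp
    rw [mem_interior_iff_mem_nhds, Metric.mem_nhds_iff] at hp
    obtain ⟨ε, hε, hball⟩ := hp
    have hmem : ((p.1 - ε / 2, p.2) : ℝ × E) ∈ Metric.ball p ε := by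
      rw [Metric.mem_ball, Prod.dist_eq]
      simp only [dist_self, Real.dist_eq]
      rw [show p.1 - ε / 2 - p.1 = -(ε / 2) by ring]
      rw [abs_neg, abs_of_pos (by linarith : (0:ℝ) < ε / 2)]
      simp only [max_eq_left (le_of_lt (by linarith : (0:ℝ) < ε / 2))]
      linarith
    have : Metric.infDist p.2 A ≤ p.1 - ε / 2 := hball hmem
    simp only [U, Set.mem_setOf_eq]
    linarith
  have hcl : closure J = C := by
    apply le_antisymm
    · exact closure_minimal hJC hC_closed
    · exact fun p hp => closure_mono hUJ (hCclU hp)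
  have hint : interior J = U := by
    apply le_antisymm
    · exact fun p hp => hintC (interior_mono hJC hp)
    · exact fun p hp => (hU_open.subset_interior_iff.2 hUJ) hp
  refine ⟨hcl, hint, ?_⟩
  rw [frontier, hcl, hint]
  ext p
  simp only [Set.mem_diff, Set.mem_setOf_eq, C, U, not_lt]
  constructor
  · rintro ⟨h1, h2⟩; exact le_antisymm h2 h1
  · intro h; exact ⟨h.ge, h.le⟩
end

section
/- Let E be a real normed vector space, A ⊆ E nonempty, S₁ = {0} × A ⊆ ℝ × E, let t₀ ≥ 0, and let S₂ = frontier(J⁺(S₁)) ∩ ({t₀} × E). Then frontier(J⁻(S₂)) ∩ interior(J⁺(S₁)) = ∅; that is, no point of the past causal boundary ∂J⁻(S₂) lies in the chronological future of S₁. (Minkowski instantiation of Lemma A.1(2): when ∂J⁻(S₂) differs from ∂J⁺(S₁) between the two slices, it lies to the past of ∂J⁺(S₁).) -/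
/-- The causal past of a set `S` in Minkowski spacetime `ℝ × E`:
`J⁻(S) = {q | ∃ p ∈ S, ‖p.2 - q.2‖ ≤ p.1 - q.1}`. -/
def Jminus {E : Type*} [NormedAddCommGroup E] [NormedSpace ℝ E]
    (S : Set (ℝ × E)) : Set (ℝ × E) :=
  {q | ∃ p ∈ S, ‖p.2 - q.2‖ ≤ p.1 - q.1}

/-- Any point `p` on the frontier of `J⁺({0} × A)` with time coordinate `t₀`
is at distance at least `t₀` from every point of `A`. -/
lemma frontier_dist_ge {E : Type*} [NormedAddCommGroup E] [NormedSpace ℝ E]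
    (A : Set E) {a : E} (ha : a ∈ A) {t₀ : ℝ} {p : ℝ × E}
    (hp : p ∈ frontier (Jplus (({0} : Set ℝ) ×ˢ A))) (hpt : p.1 = t₀) :
    t₀ ≤ ‖p.2 - a‖ := by
  by_contra h
  push_neg at h
  apply hp.2
  apply mem_interior.2
  refine ⟨{q : ℝ × E | ‖q.2 - a‖ < q.1}, ?_, ?_, ?_⟩
  · intro x hx
    exact ⟨(0, a), ⟨rfl, ha⟩, by simpa using hx.le⟩
  · exact isOpen_lt ((continuous_snd.sub continuous_const).norm) continuous_fst
  · simpa [hpt] using h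

/-- **Minkowski instantiation of Lemma A.1(2).**
Let `S₁ = {0} × A` with `A ⊆ E` nonempty, `t₀ ≥ 0`, and let
`S₂ = frontier (J⁺ S₁) ∩ ({t₀} × E)`.  Then
`frontier (J⁻ S₂) ∩ interior (J⁺ S₁) = ∅`: no point of the past causal boundary
`∂J⁻(S₂)` lies in the chronological future of `S₁`. -/
theorem frontier_Jminus_inter_interior_Jplus_eq_empty
    {E : Type*} [NormedAddCommGroup E] [NormedSpace ℝ E]
    (A : Set E) (hA : A.Nonempty) (t₀ : ℝ) (ht₀ : 0 ≤ t₀) :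
    frontier (Jminus
        (frontier (Jplus (({0} : Set ℝ) ×ˢ A)) ∩ ({t₀} : Set ℝ) ×ˢ (Set.univ : Set E))) ∩
      interior (Jplus (({0} : Set ℝ) ×ˢ A)) = ∅ := by
  ext q
  simp only [Set.mem_inter_iff, Set.mem_empty_iff_false, iff_false, not_and]
  intro hqf hqi
  -- from interior membership, get a ball around q inside J⁺
  obtain ⟨δ, hδ, hball⟩ := Metric.isOpen_iff.1 isOpen_interior q hqi
  -- the point (q.1 - δ/2, q.2) is in the ball, hence in J⁺
  have hq' : (q.1 - δ / 2, q.2) ∈ Jplus (({0} : Set ℝ) ×ˢ A) := by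
    apply interior_subset
    apply hball
    rw [Metric.mem_ball, Prod.dist_eq]
    simp only [dist_self]
    rw [Real.dist_eq]
    have : |q.1 - δ / 2 - q.1| = δ / 2 := by
      rw [show q.1 - δ / 2 - q.1 = -(δ / 2) by ring, abs_neg, abs_of_nonneg (by linarith)]
    rw [this]
    simp only [max_lt_iff]
    constructor <;> linarith
  obtain ⟨b, ⟨hb1, hb2⟩, hbq⟩ := hq'
  -- b = (0, a) with a ∈ A
  have hb0 : b.1 = 0 := hb1
  have hbq' : ‖q.2 - b.2‖ ≤ q.1 - δ / 2 := by
    simpa [hb0] using hbq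
  -- from frontier membership, q is in the closure of J⁻(S₂)
  have hqc : q ∈ closure (Jminus
      (frontier (Jplus (({0} : Set ℝ) ×ˢ A)) ∩ ({t₀} : Set ℝ) ×ˢ (Set.univ : Set E))) :=
    hqf.1
  obtain ⟨r, hr, hrq⟩ := Metric.mem_closure_iff.1 hqc (δ / 8) (by linarith)
  obtain ⟨p, ⟨hpfr, hpt, -⟩, hpr⟩ := hr
  have hpt' : p.1 = t₀ := hpt
  -- key lower bound
  have hkey : t₀ ≤ ‖p.2 - b.2‖ := frontier_dist_ge A hb2 hpfr hpt'
  -- distance estimates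
  have h1 : dist q.1 r.1 < δ / 8 := lt_of_le_of_lt (by rw [Prod.dist_eq]; exact le_max_left _ _) hrq
  have h2 : dist q.2 r.2 < δ / 8 := lt_of_le_of_lt (by rw [Prod.dist_eq]; exact le_max_right _ _) hrq
  have h1' : q.1 - δ / 8 ≤ r.1 := by
    have := abs_lt.1 (by rwa [Real.dist_eq] at h1)
    linarith [this.1, this.2]
  have h2' : ‖r.2 - q.2‖ ≤ δ / 8 := by
    rw [← dist_eq_norm, dist_comm]
    exact h2.le
  -- ‖p.2 - q.2‖ ≤ t₀ - q.1 + δ/4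
  have h3 : ‖p.2 - q.2‖ ≤ t₀ - q.1 + δ / 4 := by
    calc ‖p.2 - q.2‖ ≤ ‖p.2 - r.2‖ + ‖r.2 - q.2‖ := norm_sub_le_norm_sub_add_norm_sub _ _ _
    _ ≤ (p.1 - r.1) + δ / 8 := add_le_add hpr h2'
    _ ≤ t₀ - q.1 + δ / 4 := by rw [hpt']; linarith
  -- final contradiction
  have h4 : t₀ ≤ ‖p.2 - q.2‖ + ‖q.2 - b.2‖ := le_trans hkey (norm_sub_le_norm_sub_add_norm_sub _ _ _)
  linarith
end

section
/- Let D̄ be the closed unit disk in ℝ² (equivalently ℂ), and let 0 ≤ θ₁ < θ₂ < θ₃ < θ₄ < 2π be four angles, so the boundary points e^{iθ₁}, e^{iθ₂}, e^{iθ₃}, e^{iθ₄} lie on the unit circle in cyclic order. Let γ, δ : [0,1] → D̄ be continuous paths with γ(0) = e^{iθ₁}, γ(1) = e^{iθ₃}, δ(0) = e^{iθ₂}, δ(1) = e^{iθ₄}. Then the paths intersect: there exist s, t ∈ [0,1] with γ(s) = δ(t). -/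
/-!
If `γ` and `δ` were disjoint, `F (s, t) = γ s - δ t` would be a nonvanishing map on the simply
connected plane (after clamping the parameters to `[0, 1]`), hence `F = exp ∘ g` for a continuous
`g`. On each side of the square `[0, 1]²` one of the paths is frozen at a boundary point `e^{iθ}`,
so `F` stays in an open half-plane and `Im g` stays in one arc `θ (+ π) + 2πk + (-π/2, π/2)`.
Adjacent sides share a corner, and the cyclic order of the `θᵢ` pins down the jump of `k` at each
corner; the four jumps do not add up to zero.
-/

open Real Set

theorem ContinuousMap.exists_exp_eq_of_ne_zero {A : Type*} [TopologicalSpace A]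
    [SimplyConnectedSpace A] [LocallyPathConnectedSpace A] (f : C(A, ℂ)) (hf : ∀ a, f a ≠ 0) :
    ∃ g : C(A, ℂ), ∀ a, Complex.exp (g a) = f a := by
  obtain ⟨a₀⟩ := (inferInstance : Nonempty A)
  obtain ⟨g, ⟨-, hg⟩, -⟩ :=
    Complex.isCoveringMapOn_exp.existsUnique_continuousMap_lifts f (Complex.exp_log (hf a₀)) hf
  exact ⟨g, congr_fun hg⟩

theorem Complex.re_lt_one_of_norm_le_one {u : ℂ} (hu : ‖u‖ ≤ 1) (h1 : u ≠ 1) : u.re < 1 := by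
  by_contra! hre
  have hsq : u.re * u.re + u.im * u.im ≤ 1 := by
    rw [← Complex.normSq_apply, ← Complex.sq_norm]
    nlinarith [norm_nonneg u]
  have him : u.im ^ 2 = 0 := by nlinarith [sq_nonneg u.im]
  exact h1 (Complex.ext (by rw [Complex.one_re]; nlinarith) (by simpa using him))

theorem cos_im_sub_pos_of_exp_eq {z w : ℂ} {θ : ℝ} (hw : ‖w‖ ≤ 1)
    (hne : w ≠ Complex.exp (θ * Complex.I))
    (hz : Complex.exp z = Complex.exp (θ * Complex.I) - w) :
    0 < cos (z.im - θ) := by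
  have he : Complex.exp (θ * Complex.I) ≠ 0 := Complex.exp_ne_zero _
  set u := w / Complex.exp (θ * Complex.I)
  have hu : ‖u‖ ≤ 1 := by rwa [norm_div, Complex.norm_exp_ofReal_mul_I, div_one]
  have hu1 : u ≠ 1 := by rwa [Ne, div_eq_one_iff_eq he]
  have hexp : Complex.exp (z - θ * Complex.I) = 1 - u := by
    rw [Complex.exp_sub, hz, sub_div, div_self he]
  have hre : 0 < Real.exp z.re * cos (z.im - θ) := by
    have := congrArg Complex.re hexp
    rw [Complex.exp_re] at this
    simp only [Complex.sub_re, Complex.mul_re, Complex.ofReal_re, Complex.I_re, mul_zero,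
      Complex.ofReal_im, Complex.I_im, mul_one, sub_self, sub_zero, Complex.sub_im, Complex.mul_im,
      add_zero, Complex.one_re] at this
    rw [this]
    linarith [Complex.re_lt_one_of_norm_le_one hu hu1]
  exact pos_of_mul_pos_right hre (Real.exp_pos _).le

theorem cos_im_sub_pi_sub_pos_of_exp_eq {z w : ℂ} {θ : ℝ} (hw : ‖w‖ ≤ 1)
    (hne : w ≠ Complex.exp (θ * Complex.I))
    (hz : Complex.exp z = w - Complex.exp (θ * Complex.I)) :
    0 < cos (z.im - π - θ) := by
  simpa using cos_im_sub_pos_of_exp_eq (z := z - π * Complex.I) hw hne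
    (by rw [Complex.exp_sub, Complex.exp_pi_mul_I, hz]; ring)

theorem exists_int_abs_sub_lt_of_cos_pos {x : ℝ} (hx : 0 < cos x) :
    ∃ k : ℤ, |x - 2 * π * k| < π / 2 := by
  refine ⟨toIocDiv two_pi_pos (-π) x, ?_⟩
  set y := toIocMod two_pi_pos (-π) x with hy
  obtain ⟨hlo, hhi⟩ : y ∈ Ioc (-π) (-π + 2 * π) := toIocMod_mem_Ioc two_pi_pos (-π) x
  rw [toIocMod, zsmul_eq_mul, mul_comm] at hy
  have hcos : cos y = cos x := by rw [hy, mul_comm, Real.cos_sub_int_mul_two_pi]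
  rw [← hy, abs_lt]
  constructor
  · by_contra! h
    have := Real.cos_nonpos_of_pi_div_two_le_of_le (x := -y) (by linarith) (by linarith)
    rw [Real.cos_neg, hcos] at this
    linarith
  · by_contra! h
    have := Real.cos_nonpos_of_pi_div_two_le_of_le h (by linarith)
    linarith

theorem exists_int_abs_sub_lt_of_forall_cos_pos {X : Type*} [TopologicalSpace X]
    [PreconnectedSpace X] {φ : X → ℝ} (hφ : Continuous φ) (hcos : ∀ x, 0 < cos (φ x)) :
    ∃ k : ℤ, ∀ x, |φ x - 2 * π * k| < π / 2 := by
  rcases isEmpty_or_nonempty X with hX | ⟨⟨x₀⟩⟩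
  · exact ⟨0, fun x => isEmptyElim x⟩
  obtain ⟨k, hk⟩ := exists_int_abs_sub_lt_of_cos_pos (hcos x₀)
  refine ⟨k, fun x => ?_⟩
  have hconn := (isPreconnected_range hφ).ordConnected
  rw [abs_lt] at hk ⊢
  constructor
  · by_contra! h
    obtain ⟨y, hy⟩ := hconn.out (mem_range_self x) (mem_range_self x₀)
      (⟨by linarith, by linarith⟩ : 2 * π * k - π / 2 ∈ Icc (φ x) (φ x₀))
    exact (hcos y).ne' (Real.cos_eq_zero_iff.2 ⟨2 * k - 1, by rw [hy]; push_cast; ring⟩)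
  · by_contra! h
    obtain ⟨y, hy⟩ := hconn.out (mem_range_self x₀) (mem_range_self x)
      (⟨by linarith, by linarith⟩ : 2 * π * k + π / 2 ∈ Icc (φ x₀) (φ x))
    exact (hcos y).ne' (Real.cos_eq_zero_iff.2 ⟨2 * k, by rw [hy]; push_cast; ring⟩)

theorem Int.eq_of_abs_sub_two_pi_mul_lt {x : ℝ} {m n : ℤ} (hm : |x - 2 * π * m| < π)
    (hn : |x - 2 * π * n| < π) : m = n := by
  have h : |2 * π * ((m - n : ℤ) : ℝ)| < 2 * π := by
    calc |2 * π * ((m - n : ℤ) : ℝ)| = |(x - 2 * π * n) - (x - 2 * π * m)| := by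
          push_cast; ring_nf
      _ ≤ |x - 2 * π * n| + |x - 2 * π * m| := abs_sub _ _
      _ < 2 * π := by linarith
  rw [abs_mul, abs_of_pos two_pi_pos, mul_lt_iff_lt_one_right two_pi_pos, ← Int.cast_abs,
    ← Int.cast_one, Int.cast_lt, Int.abs_lt_one_iff, sub_eq_zero] at h
  exact h

theorem exists_apply_eq_apply_of_cyclic_boundary {θ₁ θ₂ θ₃ θ₄ : ℝ} (h₁₂ : θ₁ < θ₂)
    (h₂₃ : θ₂ < θ₃) (h₃₄ : θ₃ < θ₄) (h₄₁ : θ₄ < θ₁ + 2 * π) {γ δ : ℝ → ℂ}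
    (hγ : Continuous γ) (hδ : Continuous δ)
    (hγ_norm : ∀ s, ‖γ s‖ ≤ 1) (hδ_norm : ∀ t, ‖δ t‖ ≤ 1)
    (hγ0 : γ 0 = Complex.exp (θ₁ * Complex.I)) (hγ1 : γ 1 = Complex.exp (θ₃ * Complex.I))
    (hδ0 : δ 0 = Complex.exp (θ₂ * Complex.I)) (hδ1 : δ 1 = Complex.exp (θ₄ * Complex.I)) :
    ∃ s t, γ s = δ t := by
  by_contra! hne
  obtain ⟨g, hg⟩ := ContinuousMap.exists_exp_eq_of_ne_zero
    ⟨fun p : ℝ × ℝ => γ p.1 - δ p.2, by fun_prop⟩ fun p => sub_ne_zero.2 (hne p.1 p.2)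
  obtain ⟨kb, hkb⟩ := exists_int_abs_sub_lt_of_forall_cos_pos
    (φ := fun s => (g (s, 0)).im - π - θ₂) (by fun_prop) fun s =>
      cos_im_sub_pi_sub_pos_of_exp_eq (hγ_norm s) (hδ0 ▸ hne s 0) (by rw [hg, ← hδ0]; rfl)
  obtain ⟨kr, hkr⟩ := exists_int_abs_sub_lt_of_forall_cos_pos
    (φ := fun t => (g (1, t)).im - θ₃) (by fun_prop) fun t =>
      cos_im_sub_pos_of_exp_eq (hδ_norm t) (hγ1 ▸ (hne 1 t).symm) (by rw [hg, ← hγ1]; rfl)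
  obtain ⟨kt, hkt⟩ := exists_int_abs_sub_lt_of_forall_cos_pos
    (φ := fun s => (g (s, 1)).im - π - θ₄) (by fun_prop) fun s =>
      cos_im_sub_pi_sub_pos_of_exp_eq (hγ_norm s) (hδ1 ▸ hne s 1) (by rw [hg, ← hδ1]; rfl)
  obtain ⟨kl, hkl⟩ := exists_int_abs_sub_lt_of_forall_cos_pos
    (φ := fun t => (g (0, t)).im - θ₁) (by fun_prop) fun t =>
      cos_im_sub_pos_of_exp_eq (hδ_norm t) (hγ0 ▸ (hne 0 t).symm) (by rw [hg, ← hγ0]; rfl)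
  have hcorner : ∀ {a b : ℝ}, |a| < π / 2 → |b| < π / 2 → |a - b| < π := fun ha hb =>
    (abs_sub _ _).trans_lt (by linarith)
  have h00 : kl - kb = 1 := Int.eq_of_abs_sub_two_pi_mul_lt (x := θ₂ + π - θ₁)
    (by convert hcorner (hkl 0) (hkb 0) using 2; push_cast; ring)
    (by rw [abs_lt]; push_cast; constructor <;> linarith)
  have h10 : kr - kb = 0 := Int.eq_of_abs_sub_two_pi_mul_lt (x := θ₂ + π - θ₃)
    (by convert hcorner (hkr 0) (hkb 1) using 2; push_cast; ring)
    (by rw [abs_lt]; push_cast; constructor <;> linarith)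
  have h11 : kr - kt = 1 := Int.eq_of_abs_sub_two_pi_mul_lt (x := θ₄ + π - θ₃)
    (by convert hcorner (hkr 1) (hkt 1) using 2; push_cast; ring)
    (by rw [abs_lt]; push_cast; constructor <;> linarith)
  have h01 : kl - kt = 1 := Int.eq_of_abs_sub_two_pi_mul_lt (x := θ₄ + π - θ₁)
    (by convert hcorner (hkl 1) (hkt 0) using 2; push_cast; ring)
    (by rw [abs_lt]; push_cast; constructor <;> linarith)
  omega

/-- **Crossing paths in the disk with cyclically ordered endpoints.**
Let `D̄` be the closed unit disk in `ℂ`, and let `0 ≤ θ₁ < θ₂ < θ₃ < θ₄ < 2π` be four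
angles, so the boundary points `e^{iθ₁}, e^{iθ₂}, e^{iθ₃}, e^{iθ₄}` lie on the unit
circle in cyclic order.  Let `γ, δ : [0,1] → D̄` be continuous paths with
`γ 0 = e^{iθ₁}`, `γ 1 = e^{iθ₃}`, `δ 0 = e^{iθ₂}`, `δ 1 = e^{iθ₄}`.  Then the paths
intersect: there exist `s, t ∈ [0,1]` with `γ s = δ t`. -/
theorem paths_in_disk_cross (θ₁ θ₂ θ₃ θ₄ : ℝ)
    (h₀ : 0 ≤ θ₁) (h₁₂ : θ₁ < θ₂) (h₂₃ : θ₂ < θ₃) (h₃₄ : θ₃ < θ₄) (h₄ : θ₄ < 2 * Real.pi)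
    (γ δ : ℝ → ℂ)
    (hγc : ContinuousOn γ (Set.Icc 0 1)) (hδc : ContinuousOn δ (Set.Icc 0 1))
    (hγm : ∀ t ∈ Set.Icc (0:ℝ) 1, γ t ∈ Metric.closedBall (0 : ℂ) 1)
    (hδm : ∀ t ∈ Set.Icc (0:ℝ) 1, δ t ∈ Metric.closedBall (0 : ℂ) 1)
    (hγ0 : γ 0 = Complex.exp (θ₁ * Complex.I)) (hγ1 : γ 1 = Complex.exp (θ₃ * Complex.I))
    (hδ0 : δ 0 = Complex.exp (θ₂ * Complex.I)) (hδ1 : δ 1 = Complex.exp (θ₄ * Complex.I)) :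
    ∃ s ∈ Set.Icc (0:ℝ) 1, ∃ t ∈ Set.Icc (0:ℝ) 1, γ s = δ t := by
  let c : ℝ → Icc (0 : ℝ) 1 := projIcc 0 1 zero_le_one
  have hc : Continuous fun s => (c s : ℝ) := continuous_subtype_val.comp continuous_projIcc
  obtain ⟨s, t, hst⟩ := exists_apply_eq_apply_of_cyclic_boundary h₁₂ h₂₃ h₃₄ (by linarith)
    (hγc.comp_continuous hc fun s => (c s).2) (hδc.comp_continuous hc fun s => (c s).2)
    (fun s => mem_closedBall_zero_iff.1 (hγm _ (c s).2))
    (fun t => mem_closedBall_zero_iff.1 (hδm _ (c t).2))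
    (by simpa [c] using hγ0) (by simpa [c] using hγ1) (by simpa [c] using hδ0)
    (by simpa [c] using hδ1)
  exact ⟨c s, (c s).2, c t, (c t).2, hst⟩
end

section
/- On the Lorentzian cylinder C = ℝ × AddCircle(2π), for every point r = (t, θ) the past null cone of r coincides with the future null cone of the antipodally shifted point c = (t − π, θ + π): frontier Ĵ⁺((t − π, θ + π)) = frontier Ĵ⁻((t, θ)), where π denotes the image of π ∈ ℝ in AddCircle(2π). -/
/-- The spatial circle `ℝ/2πℤ` of circumference `2π`, with its quotient norm. -/
abbrev Circ : Type := AddCircle (2 * Real.pi)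

/-- The causal relation on the Lorentzian cylinder `C = ℝ × Circ`:
`(s, φ) ≼ (t, θ)` iff `‖θ - φ‖ ≤ t - s` (the first coordinate is time). -/
def caus (p q : ℝ × Circ) : Prop := ‖q.2 - p.2‖ ≤ q.1 - p.1

/-- The causal future `Ĵ⁺(p)` of a point of the Lorentzian cylinder. -/
def Jp (p : ℝ × Circ) : Set (ℝ × Circ) := {q | caus p q}

/-- The causal past `Ĵ⁻(p)` of a point of the Lorentzian cylinder. -/
def Jm (p : ℝ × Circ) : Set (ℝ × Circ) := {q | caus q p}

/-!
Antipodal translation `x ↦ x + π` on the circle of circumference `2π` sends the distance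
`‖x - θ‖` to `π - ‖x - θ‖`. Hence `q = (s, x)` lies in `Ĵ⁺(t - π, θ + π)` iff
`s ≥ t - ‖x - θ‖`, while it lies in `Ĵ⁻(t, θ)` iff `s ≤ t - ‖x - θ‖`: the two cones are the
regions above and below one continuous graph over the circle, so they share that graph as
their frontier.
-/

open Set

namespace AddCircle

variable {p : ℝ}

theorem exists_coe_eq_and_norm_eq_abs (x : AddCircle p) :
    ∃ y : ℝ, (y : AddCircle p) = x ∧ ‖x‖ = |y| := by
  obtain ⟨y, rfl⟩ := QuotientAddGroup.mk_surjective x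
  refine ⟨y - round (p⁻¹ * y) * p, ?_, norm_eq p⟩
  rw [coe_sub, sub_eq_self, ← zsmul_eq_mul, coe_zsmul, coe_period, zsmul_zero]

theorem norm_sub_half_period (hp : 0 < p) (x : AddCircle p) :
    ‖x - ↑(p / 2)‖ = p / 2 - ‖x‖ := by
  obtain ⟨y, rfl, hx⟩ := exists_coe_eq_and_norm_eq_abs x
  have hy : |y| ≤ p / 2 := by
    simpa only [hx, abs_of_pos hp] using norm_le_half_period p hp.ne' (x := (y : AddCircle p))
  have hnorm (z : ℝ) (hz : |z| ≤ p / 2) : ‖(z : AddCircle p)‖ = |z| :=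
    (norm_coe_eq_abs_iff p hp.ne').2 (by rwa [abs_of_pos hp])
  obtain ⟨hy₁, hy₂⟩ := abs_le.mp hy
  rw [hx, ← coe_sub]
  rcases le_total 0 y with h | h
  · rw [hnorm _ (abs_le.mpr ⟨by linarith, by linarith⟩), abs_of_nonpos (by linarith),
      abs_of_nonneg h]
    ring
  · rw [← coe_add_period, hnorm _ (abs_le.mpr ⟨by linarith, by linarith⟩),
      abs_of_nonneg (by linarith), abs_of_nonpos h]
    ring

end AddCircle

namespace Homeomorph

variable {G X : Type*} [TopologicalSpace G] [AddGroup G] [IsTopologicalAddGroup G]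
  [TopologicalSpace X]

/-- Straightens the graph of `f` to `{0} × X`. -/
def subShear (f : X → G) (hf : Continuous f) : G × X ≃ₜ G × X where
  toFun q := (q.1 - f q.2, q.2)
  invFun q := (q.1 + f q.2, q.2)
  left_inv q := by simp
  right_inv q := by simp
  continuous_toFun := by fun_prop
  continuous_invFun := by fun_prop

end Homeomorph

theorem frontier_setOf_sub_mem {G X : Type*} [TopologicalSpace G] [AddGroup G]
    [IsTopologicalAddGroup G] [TopologicalSpace X] {f : X → G} (hf : Continuous f) (s : Set G) :
    frontier {q : G × X | q.1 - f q.2 ∈ s} = {q | q.1 - f q.2 ∈ frontier s} := by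
  have hpre (u : Set G) :
      {q : G × X | q.1 - f q.2 ∈ u} = Homeomorph.subShear f hf ⁻¹' (u ×ˢ univ) := by
    ext q; simp [Homeomorph.subShear]
  rw [hpre, hpre, ← Homeomorph.preimage_frontier, frontier_prod_univ_eq]

/-- **Refocusing of boundary null geodesics at the antipodal point.**
On the Lorentzian cylinder `C = ℝ × AddCircle (2π)`, for every point `r = (t, θ)`
the past null cone of `r` coincides with the future null cone of the antipodally
shifted point `c = (t - π, θ + π)`:
`frontier Ĵ⁺((t - π, θ + π)) = frontier Ĵ⁻((t, θ))`. -/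
theorem cylinder_antipodal_refocusing (r : ℝ × Circ) :
    frontier (Jp (r.1 - Real.pi, r.2 + ((Real.pi : ℝ) : Circ))) = frontier (Jm r) := by
  obtain ⟨t, θ⟩ := r
  have hpi : ((Real.pi : ℝ) : Circ) = ((2 * Real.pi / 2 : ℝ) : Circ) := by congr 1; ring
  have hJp :
      Jp (t - Real.pi, θ + ((Real.pi : ℝ) : Circ)) = {q | q.1 - (t - ‖q.2 - θ‖) ∈ Ici 0} := by
    ext q
    simp only [Jp, caus, mem_ofPred_eq, mem_Ici, sub_add_eq_sub_sub, hpi,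
      AddCircle.norm_sub_half_period Real.two_pi_pos]
    constructor <;> intro h <;> linarith
  have hJm : Jm (t, θ) = {q | q.1 - (t - ‖q.2 - θ‖) ∈ Iic 0} := by
    ext q
    simp only [Jm, caus, mem_ofPred_eq, mem_Iic, norm_sub_rev θ]
    constructor <;> intro h <;> linarith
  have hf : Continuous fun x : Circ => t - ‖x - θ‖ := by fun_prop
  rw [hJp, hJm, frontier_setOf_sub_mem hf, frontier_setOf_sub_mem hf, frontier_Ici, frontier_Iic]
end

section
/- On the Lorentzian cylinder C = ℝ × AddCircle(2π), let c₁, c₂, r₁, r₂ ∈ C and define V₁ = Ĵ⁻(r₁) ∩ Ĵ⁻(r₂) ∩ Ĵ⁺(c₁), V₂ = Ĵ⁻(r₁) ∩ Ĵ⁻(r₂) ∩ Ĵ⁺(c₂), W₁ = Ĵ⁻(r₁) ∩ Ĵ⁺(c₁) ∩ Ĵ⁺(c₂), W₂ = Ĵ⁻(r₂) ∩ Ĵ⁺(c₁) ∩ Ĵ⁺(c₂). If V₁, V₂, W₁, W₂ are all nonempty and pairwise disjoint, then the causal complement of V₁ ∪ V₂ is nonempty and is not a connected topological subspace of C. -/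
/-- The causal complement of a set `S` on the Lorentzian cylinder: the set of points
causally disconnected from every point of `S`. -/
def causCompl (S : Set (ℝ × Circ)) : Set (ℝ × Circ) :=
  {q | ∀ p ∈ S, ¬ caus p q ∧ ¬ caus q p}

lemma caus_refl (p : ℝ × Circ) : caus p p := by simp [caus]

lemma caus_trans {p q r : ℝ × Circ} (h1 : caus p q) (h2 : caus q r) : caus p r := by
  have := dist_triangle r.2 q.2 p.2
  simp only [dist_eq_norm] at this
  unfold caus at *
  linarith

lemma coe_toIocMod_eq (a b : ℝ) :
    ((toIocMod Real.two_pi_pos a b : ℝ) : Circ) = (b : Circ) := by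
  rw [QuotientAddGroup.eq_iff_sub_mem, toIocMod_sub_self]
  exact AddSubgroup.zsmul_mem_zmultiples _ _

lemma coe_toIcoMod_eq (a b : ℝ) :
    ((toIcoMod Real.two_pi_pos a b : ℝ) : Circ) = (b : Circ) := by
  rw [QuotientAddGroup.eq_iff_sub_mem, toIcoMod_sub_self]
  exact AddSubgroup.zsmul_mem_zmultiples _ _

/-- Sufficient condition for membership in the causal complement of `V₁ ∪ V₂`. -/
lemma mem_causCompl_of {c₁ c₂ r₁ r₂ q : ℝ × Circ}
    (h1 : ¬ caus c₁ q) (h2 : ¬ caus c₂ q) (h3 : ¬ (caus q r₁ ∧ caus q r₂)) :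
    q ∈ causCompl ((Jm r₁ ∩ Jm r₂ ∩ Jp c₁) ∪ (Jm r₁ ∩ Jm r₂ ∩ Jp c₂)) := by
  rintro p (⟨⟨hpr₁, hpr₂⟩, hcp⟩ | ⟨⟨hpr₁, hpr₂⟩, hcp⟩)
  · exact ⟨fun h => h1 (caus_trans hcp h),
      fun h => h3 ⟨caus_trans h hpr₁, caus_trans h hpr₂⟩⟩
  · exact ⟨fun h => h2 (caus_trans hcp h),
      fun h => h3 ⟨caus_trans h hpr₁, caus_trans h hpr₂⟩⟩

/-- The key IVT construction: a point of the causal complement with angle strictly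
inside the arc `(α, β)`. -/
lemma witness (a b α β : ℝ) (hαβ : α < β) (r₁ r₂ : ℝ × Circ)
    (h1 : ¬ caus (a, (α : Circ)) (b, (β : Circ)))
    (h2 : ¬ caus (b, (β : Circ)) (a, (α : Circ)))
    (E : ∀ q, ¬ (caus (a, (α : Circ)) q ∧ caus (b, (β : Circ)) q ∧ caus q r₁ ∧ caus q r₂)) :
    ∃ s ∈ Set.Ioo α β, ∃ t : ℝ,
      ¬ caus (a, (α : Circ)) (t, (s : Circ)) ∧ ¬ caus (b, (β : Circ)) (t, (s : Circ)) ∧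
      ¬ (caus (t, (s : Circ)) r₁ ∧ caus (t, (s : Circ)) r₂) := by
  classical
  set h : ℝ → ℝ :=
    fun s => (a + ‖((s - α : ℝ) : Circ)‖) - (b + ‖((s - β : ℝ) : Circ)‖) with hh
  have hcont : Continuous h := by
    have c1 : Continuous fun s : ℝ => ((s - α : ℝ) : Circ) :=
      (AddCircle.continuous_mk' _).comp (continuous_id.sub continuous_const)
    have c2 : Continuous fun s : ℝ => ((s - β : ℝ) : Circ) :=
      (AddCircle.continuous_mk' _).comp (continuous_id.sub continuous_const)
    exact (continuous_const.add c1.norm).sub (continuous_const.add c2.norm)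
  have hn2 : a - b < ‖((α - β : ℝ) : Circ)‖ := by
    rw [AddCircle.coe_sub]; exact not_le.mp h2
  have hn1 : b - a < ‖((β - α : ℝ) : Circ)‖ := by
    rw [AddCircle.coe_sub]; exact not_le.mp h1
  have hαneg : h α < 0 := by
    have : ((α - α : ℝ) : Circ) = 0 := by rw [sub_self]; rfl
    simp only [hh, this, norm_zero]
    linarith
  have hβpos : 0 < h β := by
    have : ((β - β : ℝ) : Circ) = 0 := by rw [sub_self]; rfl
    simp only [hh, this, norm_zero]
    linarith
  obtain ⟨s, hsIcc, hs0⟩ :=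
    intermediate_value_Icc hαβ.le hcont.continuousOn ⟨hαneg.le, hβpos.le⟩
  have hsIoo : s ∈ Set.Ioo α β := by
    refine ⟨lt_of_le_of_ne hsIcc.1 ?_, lt_of_le_of_ne hsIcc.2 ?_⟩
    · intro hs; rw [← hs] at hs0; linarith
    · intro hs; rw [hs] at hs0; linarith
  set f : ℝ := a + ‖((s - α : ℝ) : Circ)‖ with hf
  have hfeq : f = b + ‖((s - β : ℝ) : Circ)‖ := by
    have := hs0
    simp only [hh] at this
    linarith [sub_eq_zero.mp this]
  have hfa : ‖((s : ℝ) : Circ) - ((α : ℝ) : Circ)‖ = f - a := by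
    rw [← AddCircle.coe_sub]; simp [hf]
  have hfb : ‖((s : ℝ) : Circ) - ((β : ℝ) : Circ)‖ = f - b := by
    rw [← AddCircle.coe_sub, hfeq]; simp
  set M : ℝ := min (r₁.1 - ‖r₁.2 - ((s : ℝ) : Circ)‖) (r₂.1 - ‖r₂.2 - ((s : ℝ) : Circ)‖) with hM
  have hMf : M < f := by
    by_contra hle
    push_neg at hle
    refine E (f, ((s : ℝ) : Circ)) ⟨?_, ?_, ?_, ?_⟩
    · show ‖((s : ℝ) : Circ) - ((α : ℝ) : Circ)‖ ≤ f - a; rw [hfa]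
    · show ‖((s : ℝ) : Circ) - ((β : ℝ) : Circ)‖ ≤ f - b; rw [hfb]
    · show ‖r₁.2 - ((s : ℝ) : Circ)‖ ≤ r₁.1 - f
      have := le_trans hle (min_le_left _ _); linarith
    · show ‖r₂.2 - ((s : ℝ) : Circ)‖ ≤ r₂.1 - f
      have := le_trans hle (min_le_right _ _); linarith
  refine ⟨s, hsIoo, (M + f) / 2, ?_, ?_, ?_⟩
  · show ¬ ‖((s : ℝ) : Circ) - ((α : ℝ) : Circ)‖ ≤ (M + f) / 2 - a
    rw [hfa]; intro hcon; linarith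
  · show ¬ ‖((s : ℝ) : Circ) - ((β : ℝ) : Circ)‖ ≤ (M + f) / 2 - b
    rw [hfb]; intro hcon; linarith
  · rintro ⟨hq1, hq2⟩
    have e1 : ‖r₁.2 - ((s : ℝ) : Circ)‖ ≤ r₁.1 - (M + f) / 2 := hq1
    have e2 : ‖r₂.2 - ((s : ℝ) : Circ)‖ ≤ r₂.1 - (M + f) / 2 := hq2
    have := min_le_left (r₁.1 - ‖r₁.2 - ((s : ℝ) : Circ)‖) (r₂.1 - ‖r₂.2 - ((s : ℝ) : Circ)‖)
    have := min_le_right (r₁.1 - ‖r₁.2 - ((s : ℝ) : Circ)‖) (r₂.1 - ‖r₂.2 - ((s : ℝ) : Circ)‖)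
    have hM1 : (M + f) / 2 ≤ M := le_min (by linarith) (by linarith)
    linarith

/-- **Disconnectedness of the causal complement of the decision regions.**
On the Lorentzian cylinder, let `c₁, c₂, r₁, r₂` be points and define the input
regions `V₁ = Ĵ⁻(r₁) ∩ Ĵ⁻(r₂) ∩ Ĵ⁺(c₁)`, `V₂ = Ĵ⁻(r₁) ∩ Ĵ⁻(r₂) ∩ Ĵ⁺(c₂)` and output
regions `W₁ = Ĵ⁻(r₁) ∩ Ĵ⁺(c₁) ∩ Ĵ⁺(c₂)`, `W₂ = Ĵ⁻(r₂) ∩ Ĵ⁺(c₁) ∩ Ĵ⁺(c₂)`.  If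
`V₁, V₂, W₁, W₂` are all nonempty and pairwise disjoint, then the causal complement of
`V₁ ∪ V₂` is nonempty and is not a connected topological subspace of `C`. -/
theorem causal_complement_disconnected (c₁ c₂ r₁ r₂ : ℝ × Circ)
    (hV₁ : (Jm r₁ ∩ Jm r₂ ∩ Jp c₁).Nonempty)
    (hV₂ : (Jm r₁ ∩ Jm r₂ ∩ Jp c₂).Nonempty)
    (hW₁ : (Jm r₁ ∩ Jp c₁ ∩ Jp c₂).Nonempty)
    (hW₂ : (Jm r₂ ∩ Jp c₁ ∩ Jp c₂).Nonempty)
    (hVV : Disjoint (Jm r₁ ∩ Jm r₂ ∩ Jp c₁) (Jm r₁ ∩ Jm r₂ ∩ Jp c₂))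
    (hV₁W₁ : Disjoint (Jm r₁ ∩ Jm r₂ ∩ Jp c₁) (Jm r₁ ∩ Jp c₁ ∩ Jp c₂))
    (hV₁W₂ : Disjoint (Jm r₁ ∩ Jm r₂ ∩ Jp c₁) (Jm r₂ ∩ Jp c₁ ∩ Jp c₂))
    (hV₂W₁ : Disjoint (Jm r₁ ∩ Jm r₂ ∩ Jp c₂) (Jm r₁ ∩ Jp c₁ ∩ Jp c₂))
    (hV₂W₂ : Disjoint (Jm r₁ ∩ Jm r₂ ∩ Jp c₂) (Jm r₂ ∩ Jp c₁ ∩ Jp c₂))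
    (hWW : Disjoint (Jm r₁ ∩ Jp c₁ ∩ Jp c₂) (Jm r₂ ∩ Jp c₁ ∩ Jp c₂)) :
    (causCompl ((Jm r₁ ∩ Jm r₂ ∩ Jp c₁) ∪ (Jm r₁ ∩ Jm r₂ ∩ Jp c₂))).Nonempty ∧
    ¬ IsPreconnected (causCompl ((Jm r₁ ∩ Jm r₂ ∩ Jp c₁) ∪ (Jm r₁ ∩ Jm r₂ ∩ Jp c₂))) := by
  haveI : Fact (0 < 2 * Real.pi) := ⟨Real.two_pi_pos⟩
  clear hW₁ hW₂ hV₁W₁ hV₁W₂ hV₂W₁ hV₂W₂ hWW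
  obtain ⟨a, γ₁⟩ := c₁
  obtain ⟨b, γ₂⟩ := c₂
  obtain ⟨α, rfl⟩ := QuotientAddGroup.mk_surjective γ₁
  obtain ⟨β₀, rfl⟩ := QuotientAddGroup.mk_surjective γ₂
  -- basic causal facts
  obtain ⟨p₁, ⟨hp₁r₁, hp₁r₂⟩, hc₁p₁⟩ := hV₁
  obtain ⟨p₂, ⟨hp₂r₁, hp₂r₂⟩, hc₂p₂⟩ := hV₂
  have hc₁r₁ : caus (a, ((α : ℝ) : Circ)) r₁ := caus_trans hc₁p₁ hp₁r₁
  have hc₁r₂ : caus (a, ((α : ℝ) : Circ)) r₂ := caus_trans hc₁p₁ hp₁r₂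
  have hc₂r₁ : caus (b, ((β₀ : ℝ) : Circ)) r₁ := caus_trans hc₂p₂ hp₂r₁
  have hc₂r₂ : caus (b, ((β₀ : ℝ) : Circ)) r₂ := caus_trans hc₂p₂ hp₂r₂
  have E : ∀ q, ¬ (caus (a, ((α : ℝ) : Circ)) q ∧ caus (b, ((β₀ : ℝ) : Circ)) q ∧
      caus q r₁ ∧ caus q r₂) := by
    rintro q ⟨h1, h2, h3, h4⟩
    exact Set.disjoint_left.mp hVV ⟨⟨h3, h4⟩, h1⟩ ⟨⟨h3, h4⟩, h2⟩
  have hsl₁ : ¬ caus (a, ((α : ℝ) : Circ)) (b, ((β₀ : ℝ) : Circ)) :=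
    fun h => E _ ⟨h, caus_refl _, hc₂r₁, hc₂r₂⟩
  have hsl₂ : ¬ caus (b, ((β₀ : ℝ) : Circ)) (a, ((α : ℝ) : Circ)) :=
    fun h => E _ ⟨caus_refl _, h, hc₁r₁, hc₁r₂⟩
  -- normalize the lift of the second angle
  have hne : ((α : ℝ) : Circ) ≠ ((β₀ : ℝ) : Circ) := by
    intro h
    have k1 : ¬ ‖((β₀ : ℝ) : Circ) - ((α : ℝ) : Circ)‖ ≤ b - a := hsl₁
    have k2 : ¬ ‖((α : ℝ) : Circ) - ((β₀ : ℝ) : Circ)‖ ≤ a - b := hsl₂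
    rw [← h, sub_self, norm_zero] at k1
    rw [h, sub_self, norm_zero] at k2
    push_neg at k1 k2
    linarith
  set β : ℝ := toIocMod Real.two_pi_pos α β₀ with hβdef
  have hβcoe : ((β : ℝ) : Circ) = ((β₀ : ℝ) : Circ) := coe_toIocMod_eq α β₀
  have hβIoc : β ∈ Set.Ioc α (α + 2 * Real.pi) := toIocMod_mem_Ioc _ α β₀
  have hβlt : β < α + 2 * Real.pi := by
    rcases lt_or_eq_of_le hβIoc.2 with h | h
    · exact h
    · exfalso
      apply hne
      rw [← hβcoe, h, AddCircle.coe_add_period]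
  have hαβ : α < β := hβIoc.1
  rw [← hβcoe] at hc₂r₁ hc₂r₂ E hsl₁ hsl₂ ⊢
  -- the two witnesses
  obtain ⟨s₁, hs₁, t₁, hw₁a, hw₁b, hw₁r⟩ := witness a b α β hαβ r₁ r₂ hsl₁ hsl₂ E
  have hcoeper : (((α + 2 * Real.pi : ℝ)) : Circ) = ((α : ℝ) : Circ) :=
    AddCircle.coe_add_period _ _
  obtain ⟨s₂, hs₂, t₂, hw₂b, hw₂a, hw₂r⟩ :=
    witness b a β (α + 2 * Real.pi) hβlt r₁ r₂
      (by rw [hcoeper]; exact hsl₂)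
      (by rw [hcoeper]; exact hsl₁)
      (by rw [hcoeper]; rintro q ⟨h1, h2, h3, h4⟩; exact E q ⟨h2, h1, h3, h4⟩)
  rw [hcoeper] at hw₂a
  have hq₁mem := mem_causCompl_of (c₁ := (a, ((α : ℝ) : Circ))) (c₂ := (b, ((β : ℝ) : Circ)))
    hw₁a hw₁b hw₁r
  have hq₂mem := mem_causCompl_of (c₁ := (a, ((α : ℝ) : Circ))) (c₂ := (b, ((β : ℝ) : Circ)))
    hw₂a hw₂b hw₂r
  refine ⟨⟨_, hq₁mem⟩, ?_⟩
  intro hconn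
  set u : Set (ℝ × Circ) :=
    (Set.univ : Set ℝ) ×ˢ ((fun x : ℝ => ((x : ℝ) : Circ)) '' Set.Ioo α β) with hu
  set v : Set (ℝ × Circ) :=
    (Set.univ : Set ℝ) ×ˢ ((fun x : ℝ => ((x : ℝ) : Circ)) '' Set.Ioo β (α + 2 * Real.pi)) with hv
  have hou : IsOpen u := isOpen_univ.prod (QuotientAddGroup.isOpenMap_coe _ isOpen_Ioo)
  have hov : IsOpen v := isOpen_univ.prod (QuotientAddGroup.isOpenMap_coe _ isOpen_Ioo)
  have hsub : causCompl ((Jm r₁ ∩ Jm r₂ ∩ Jp (a, ((α : ℝ) : Circ))) ∪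
      (Jm r₁ ∩ Jm r₂ ∩ Jp (b, ((β : ℝ) : Circ)))) ⊆ u ∪ v := by
    rintro ⟨t, θ⟩ hq
    have h1 := hq (a, ((α : ℝ) : Circ)) (Or.inl ⟨⟨hc₁r₁, hc₁r₂⟩, caus_refl _⟩)
    have h2 := hq (b, ((β : ℝ) : Circ)) (Or.inr ⟨⟨hc₂r₁, hc₂r₂⟩, caus_refl _⟩)
    have hθ₁ : θ ≠ ((α : ℝ) : Circ) := by
      intro h
      have k1 : ¬ ‖θ - ((α : ℝ) : Circ)‖ ≤ t - a := h1.1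
      have k2 : ¬ ‖((α : ℝ) : Circ) - θ‖ ≤ a - t := h1.2
      rw [h, sub_self, norm_zero] at k1
      rw [← h, sub_self, norm_zero] at k2
      push_neg at k1 k2
      linarith
    have hθ₂ : θ ≠ ((β : ℝ) : Circ) := by
      intro h
      have k1 : ¬ ‖θ - ((β : ℝ) : Circ)‖ ≤ t - b := h2.1
      have k2 : ¬ ‖((β : ℝ) : Circ) - θ‖ ≤ b - t := h2.2
      rw [h, sub_self, norm_zero] at k1
      rw [← h, sub_self, norm_zero] at k2
      push_neg at k1 k2
      linarith
    obtain ⟨x₀, rfl⟩ := QuotientAddGroup.mk_surjective θ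
    set x : ℝ := toIcoMod Real.two_pi_pos α x₀ with hx
    have hxcoe : ((x : ℝ) : Circ) = ((x₀ : ℝ) : Circ) := coe_toIcoMod_eq α x₀
    have hxI : x ∈ Set.Ico α (α + 2 * Real.pi) := toIcoMod_mem_Ico _ α x₀
    have hx₁ : x ≠ α := fun h => hθ₁ (by rw [← hxcoe, h])
    have hx₂ : x ≠ β := fun h => hθ₂ (by rw [← hxcoe, h])
    rcases lt_or_gt_of_ne hx₂ with hlt | hgt
    · exact Or.inl ⟨Set.mem_univ _, ⟨x, ⟨lt_of_le_of_ne hxI.1 (Ne.symm hx₁), hlt⟩, hxcoe⟩⟩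
    · exact Or.inr ⟨Set.mem_univ _, ⟨x, ⟨hgt, hxI.2⟩, hxcoe⟩⟩
  have hne₁ : (causCompl ((Jm r₁ ∩ Jm r₂ ∩ Jp (a, ((α : ℝ) : Circ))) ∪
      (Jm r₁ ∩ Jm r₂ ∩ Jp (b, ((β : ℝ) : Circ)))) ∩ u).Nonempty :=
    ⟨(t₁, ((s₁ : ℝ) : Circ)), hq₁mem, Set.mem_univ _, ⟨s₁, hs₁, rfl⟩⟩
  have hne₂ : (causCompl ((Jm r₁ ∩ Jm r₂ ∩ Jp (a, ((α : ℝ) : Circ))) ∪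
      (Jm r₁ ∩ Jm r₂ ∩ Jp (b, ((β : ℝ) : Circ)))) ∩ v).Nonempty :=
    ⟨(t₂, ((s₂ : ℝ) : Circ)), hq₂mem, Set.mem_univ _, ⟨s₂, hs₂, rfl⟩⟩
  obtain ⟨q, -, hqu, hqv⟩ := hconn u v hou hov hsub hne₁ hne₂
  obtain ⟨x, hxI, hxe⟩ := hqu.2
  obtain ⟨y, hyI, hye⟩ := hqv.2
  have hxy : ((x : ℝ) : Circ) = ((y : ℝ) : Circ) := hxe.trans hye.symm
  have hxIco : x ∈ Set.Ico α (α + 2 * Real.pi) := ⟨hxI.1.le, lt_trans hxI.2 (by linarith)⟩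
  have hyIco : y ∈ Set.Ico α (α + 2 * Real.pi) := ⟨(lt_trans hαβ hyI.1).le, hyI.2⟩
  rw [AddCircle.coe_eq_coe_iff_of_mem_Ico hxIco hyIco] at hxy
  have := hxI.2
  have := hyI.1
  linarith [hxy ▸ hxI.2]
end
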